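/- Let V ∈ ℝ[X], let I ⊆ (0,∞) be an interval, and let s : I → ℝ^m be a differentiable map whose coordinates are pairwise distinct for every ħ ∈ I and satisfy, for all ħ ∈ I and all i, the Bethe equations V′(s_i(ħ)) = 2ħ ∑_{j≠i} 1/(s_i(ħ) − s_j(ħ)). Define F⁰(ħ) = ħ² ∑_{i≠j} ln|s_i(ħ) − s_j(ħ)| − ħ ∑_{i=1}^m V(s_i(ħ)). Then F⁰ is differentiable on I and satisfies the dilaton equation ħ · dF⁰/dħ (ħ) = 2 F⁰(ħ) + ħ ∑_{i=1}^m V(s_i(ħ)) for every ħ ∈ I. -/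

import Mathlib

open Finset Polynomial

/-! Differentiating `F⁰` term by term, `ħ · dF⁰/dħ = 2F⁰ + ħ ∑ V(sᵢ) + ħ (ħ L' − S')` with
`L' = ∑_{i≠j} (sᵢ' − sⱼ')/(sᵢ − sⱼ)` and `S' = ∑ V′(sᵢ) sᵢ'`. Antisymmetrizing the double sum gives
`L' = 2 ∑ᵢ sᵢ' ∑_{j≠i} 1/(sᵢ − sⱼ)`, so the Bethe equations say exactly that `ħ L' = S'`. -/

section OffDiagonalSums

variable {ι M : Type*} [Fintype ι] [DecidableEq ι]

theorem sum_sum_erase_comm [AddCommMonoid M] (f : ι → ι → M) :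
    ∑ i, ∑ j ∈ univ.erase i, f i j = ∑ j, ∑ i ∈ univ.erase j, f i j :=
  Finset.sum_comm' fun _ _ => by simp [and_comm, ne_comm]

theorem sum_sum_erase_sub_div_sub {K : Type*} [Field K] (x y : ι → K) :
    ∑ i, ∑ j ∈ univ.erase i, (y i - y j) / (x i - x j)
      = 2 * ∑ i, y i * ∑ j ∈ univ.erase i, 1 / (x i - x j) := by
  have hantisymm : ∑ i, ∑ j ∈ univ.erase i, y j / (x i - x j)
      = -∑ i, ∑ j ∈ univ.erase i, y i / (x i - x j) := by
    rw [sum_sum_erase_comm]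
    simp only [← Finset.sum_neg_distrib, ← div_neg, neg_sub]
  simp only [sub_div, Finset.sum_sub_distrib, hantisymm, sub_neg_eq_add, ← two_mul]
  congr 1
  simp only [Finset.mul_sum, mul_one_div]

end OffDiagonalSums

section Derivatives

variable {ι : Type*} [Fintype ι] {s : ι → ℝ → ℝ} {s' : ι → ℝ}
  {I : Set ℝ} {h : ℝ}

theorem hasDerivWithinAt_sum_sum_erase_log_abs_sub [DecidableEq ι]
    (hs : ∀ i, HasDerivWithinAt (s i) (s' i) I h)
    (hdist : ∀ i j, i ≠ j → s i h ≠ s j h) :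
    HasDerivWithinAt (fun τ => ∑ i, ∑ j ∈ univ.erase i, Real.log |s i τ - s j τ|)
      (∑ i, ∑ j ∈ univ.erase i, (s' i - s' j) / (s i h - s j h)) I h := by
  refine HasDerivWithinAt.fun_sum fun i _ => HasDerivWithinAt.fun_sum fun j hj => ?_
  simp only [Real.log_abs]
  exact ((hs i).sub (hs j)).log (sub_ne_zero.2 (hdist i j (Finset.ne_of_mem_erase hj).symm))

theorem Polynomial.hasDerivWithinAt_sum_eval (V : ℝ[X])
    (hs : ∀ i, HasDerivWithinAt (s i) (s' i) I h) :
    HasDerivWithinAt (fun τ => ∑ i, V.eval (s i τ))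
      (∑ i, V.derivative.eval (s i h) * s' i) I h :=
  HasDerivWithinAt.fun_sum fun i _ => (V.hasDerivAt (s i h)).comp_hasDerivWithinAt h (hs i)

end Derivatives

theorem planar_free_energy_dilaton_general (m : ℕ) (V : Polynomial ℝ)
    (I : Set ℝ)
    (s s' : ℝ → Fin m → ℝ)
    (hdiff : ∀ h ∈ I, ∀ i, HasDerivWithinAt (fun τ => s τ i) (s' h i) I h)
    (hdist : ∀ h ∈ I, ∀ i j, i ≠ j → s h i ≠ s h j)
    (hBethe : ∀ h ∈ I, ∀ i,
      V.derivative.eval (s h i)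
        = 2 * h * ∑ j ∈ univ.erase i, 1 / (s h i - s h j)) :
    ∀ h ∈ I, ∃ d : ℝ,
      HasDerivWithinAt
        (fun τ => τ ^ 2 * ∑ i, ∑ j ∈ univ.erase i, Real.log |s τ i - s τ j|
          - τ * ∑ i, V.eval (s τ i)) d I h ∧
      h * d
        = 2 * (h ^ 2 * ∑ i, ∑ j ∈ univ.erase i, Real.log |s h i - s h j|
            - h * ∑ i, V.eval (s h i))
          + h * ∑ i, V.eval (s h i) := by
  intro h hh
  have hL := hasDerivWithinAt_sum_sum_erase_log_abs_sub (hdiff h hh) (hdist h hh)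
  have hS := V.hasDerivWithinAt_sum_eval (hdiff h hh)
  have hsq : HasDerivWithinAt (fun τ : ℝ => τ ^ 2) (2 * h) I h := by
    simpa using (hasDerivAt_pow 2 h).hasDerivWithinAt
  refine ⟨_, (hsq.mul hL).sub ((hasDerivWithinAt_id h I).mul hS), ?_⟩
  have hkey : h * ∑ i, ∑ j ∈ univ.erase i, (s' h i - s' h j) / (s h i - s h j)
      = ∑ i, V.derivative.eval (s h i) * s' h i := by
    rw [sum_sum_erase_sub_div_sub, Finset.mul_sum, Finset.mul_sum]
    refine Finset.sum_congr rfl fun i _ => ?_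
    rw [hBethe h hh i]
    ring
  simp only [id]
  linear_combination h ^ 2 * hkey

/-- Along a differentiable family of Bethe roots parametrized by
`ħ ∈ I ⊆ (0,∞)`, the planar free energy
`F⁰(ħ) = ħ² ∑_{i≠j} ln|s i (ħ) − s j (ħ)| − ħ ∑ i, V(s i (ħ))`
is differentiable and satisfies the dilaton equation
`ħ · dF⁰/dħ = 2 F⁰(ħ) + ħ ∑ i, V(s i (ħ))`. -/
theorem planar_free_energy_dilaton (m : ℕ) (V : Polynomial ℝ)
    (I : Set ℝ) (hI : I.OrdConnected) (hInontriv : I.Nontrivial)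
    (hIpos : ∀ h ∈ I, (0 : ℝ) < h)
    (s s' : ℝ → Fin m → ℝ)
    (hdiff : ∀ h ∈ I, ∀ i, HasDerivWithinAt (fun τ => s τ i) (s' h i) I h)
    (hdist : ∀ h ∈ I, ∀ i j, i ≠ j → s h i ≠ s h j)
    (hBethe : ∀ h ∈ I, ∀ i,
      V.derivative.eval (s h i)
        = 2 * h * ∑ j ∈ univ.erase i, 1 / (s h i - s h j)) :
    ∀ h ∈ I, ∃ d : ℝ,
      HasDerivWithinAt
        (fun τ => τ ^ 2 * ∑ i, ∑ j ∈ univ.erase i, Real.log |s τ i - s τ j|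
          - τ * ∑ i, V.eval (s τ i)) d I h ∧
      h * d
        = 2 * (h ^ 2 * ∑ i, ∑ j ∈ univ.erase i, Real.log |s h i - s h j|
            - h * ∑ i, V.eval (s h i))
          + h * ∑ i, V.eval (s h i) :=
  planar_free_energy_dilaton_general m V I s s' hdiff hdist hBethe
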